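/- For any two real m×n matrices X and Y, ‖σ(X) − σ(Y)‖ ≤ ‖X − Y‖, where the left norm is the Euclidean norm in ℝⁿ and the right norm is the Frobenius norm; i.e., the singular value map σ is 1-Lipschitz. -/

import Mathlib

open Filter Topology Matrix

noncomputable section

abbrev Mat (m n : ℕ) := Matrix (Fin m) (Fin n) ℝ

namespace Paper

/-- Frobenius (trace) inner product on real matrices. -/
def finner {m n : ℕ} (X Y : Mat m n) : ℝ := ∑ i, ∑ j, X i j * Y i j

/-- Frobenius norm. -/
def fnorm {m n : ℕ} (X : Mat m n) : ℝ := Real.sqrt (finner X X)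

/-- Euclidean inner product on `ℝⁿ`. -/
def vinner {n : ℕ} (x y : Fin n → ℝ) : ℝ := ∑ i, x i * y i

/-- Euclidean norm on `ℝⁿ`. -/
def vnorm {n : ℕ} (x : Fin n → ℝ) : ℝ := Real.sqrt (vinner x x)

/-- Eigenvalues of a real symmetric matrix, arranged in nonincreasing order. -/
def eigs {k : ℕ} (A : Matrix (Fin k) (Fin k) ℝ) (hA : A.IsHermitian) : Fin k → ℝ :=
  fun i => hA.eigenvalues (Tuple.sort (fun j => -(hA.eigenvalues j)) i)

/-- Singular values of a real `m × n` matrix, arranged in nonincreasing order. -/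
def svals {m n : ℕ} (X : Mat m n) : Fin n → ℝ :=
  fun i => Real.sqrt (eigs _ (Matrix.isHermitian_conjTranspose_mul_self X) i)

/-- The `m × n` matrix with `x` on the diagonal and zeros elsewhere. -/
def mdiag {m n : ℕ} (x : Fin n → ℝ) : Mat m n :=
  fun i j => if (i : ℕ) = (j : ℕ) then x j else 0

/-- The symmetric block matrix `B(X) = [[0, X], [Xᵀ, 0]]`, reindexed over `Fin (m+n)`. -/
def bmat {m n : ℕ} (X : Mat m n) : Matrix (Fin (m + n)) (Fin (m + n)) ℝ :=
  Matrix.reindex finSumFinEquiv finSumFinEquiv (Matrix.fromBlocks 0 X Xᵀ 0)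

lemma bmat_isHermitian {m n : ℕ} (X : Mat m n) : (bmat X).IsHermitian := by
  rw [Matrix.IsHermitian]
  ext i j
  simp only [bmat, Matrix.conjTranspose_apply, Matrix.reindex_apply, Matrix.submatrix_apply,
    star_trivial]
  rcases hi : finSumFinEquiv.symm i with a | a <;> rcases hj : finSumFinEquiv.symm j with b | b <;>
    simp [Matrix.fromBlocks, Matrix.transpose_apply]

/-- Eigenvalues of `B(X)` in nonincreasing order. -/
def beigs {m n : ℕ} (X : Mat m n) : Fin (m + n) → ℝ :=
  eigs (bmat X) (bmat_isHermitian X)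

/-- `Q` is a signed permutation matrix. -/
def IsSignedPerm {n : ℕ} (Q : Matrix (Fin n) (Fin n) ℝ) : Prop :=
  ∃ (e : Equiv.Perm (Fin n)) (s : Fin n → ℝ), (∀ i, s i = 1 ∨ s i = -1) ∧
    ∀ i j, Q i j = if j = e i then s i else 0

/-- A set of vectors invariant under all signed permutations. -/
def AbsSymSet {n : ℕ} (K : Set (Fin n → ℝ)) : Prop :=
  ∀ Q, IsSignedPerm Q → ∀ x ∈ K, Q.mulVec x ∈ K

/-- An extended-real-valued absolutely symmetric function. -/
def AbsSymFun {n : ℕ} (f : (Fin n → ℝ) → EReal) : Prop :=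
  ∀ Q, IsSignedPerm Q → ∀ x, f (Q.mulVec x) = f x

/-- Euclidean distance from a point to a set in `ℝⁿ`. -/
def vdist {n : ℕ} (x : Fin n → ℝ) (K : Set (Fin n → ℝ)) : ℝ :=
  sInf ((fun y => vnorm (x - y)) '' K)

/-- Frobenius distance from a matrix to a set of matrices. -/
def mdist {m n : ℕ} (X : Mat m n) (Γ : Set (Mat m n)) : ℝ :=
  sInf ((fun Y => fnorm (X - Y)) '' Γ)

section Variational

variable {E : Type*} [AddCommGroup E] [Module ℝ E] [TopologicalSpace E]

/-- The subderivative `dg(x)(w) = liminf_{t↓0, w'→w} (g(x+tw') - g(x))/t`. -/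
def subderiv (g : E → EReal) (x w : E) : EReal :=
  liminf (fun p : ℝ × E => ((p.1⁻¹ : ℝ) : EReal) * (g (x + p.1 • p.2) - g x))
    ((𝓝[>] (0 : ℝ)) ×ˢ 𝓝 w)

/-- The second-order difference quotient `Δ²_τ g(x | v)(w)`. -/
def secondQuot (ip : E → E → ℝ) (g : E → EReal) (x v : E) (τ : ℝ) (w : E) : EReal :=
  ((2 / τ ^ 2 : ℝ) : EReal) * (g (x + τ • w) - g x - ((τ * ip v w : ℝ) : EReal))

/-- The second subderivative `d²g(x | v)(w)`. -/
def secondSubderiv (ip : E → E → ℝ) (g : E → EReal) (x v w : E) : EReal :=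
  liminf (fun p : ℝ × E => secondQuot ip g x v p.1 p.2) ((𝓝[>] (0 : ℝ)) ×ˢ 𝓝 w)

/-- The parabolic difference quotient `Δ²_τ g(x)(w | z)`. -/
def parabQuot (g : E → EReal) (x w : E) (τ : ℝ) (z : E) : EReal :=
  ((2 / τ ^ 2 : ℝ) : EReal) *
    (g (x + τ • w + (τ ^ 2 / 2) • z) - g x - ((τ : ℝ) : EReal) * subderiv g x w)

/-- The parabolic subderivative `d²g(x)(w | z)`. -/
def parabolicSubderiv (g : E → EReal) (x w z : E) : EReal :=
  liminf (fun p : ℝ × E => parabQuot g x w p.1 p.2) ((𝓝[>] (0 : ℝ)) ×ˢ 𝓝 z)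

/-- Parabolic epi-differentiability of `g` at `x` for `w`. -/
def ParabEpiDiffAt (g : E → EReal) (x w : E) : Prop :=
  (∃ z, parabolicSubderiv g x w z < ⊤) ∧
  ∀ z : E, ∀ t : ℕ → ℝ, (∀ k, 0 < t k) → Tendsto t atTop (𝓝 0) →
    ∃ zk : ℕ → E, Tendsto zk atTop (𝓝 z) ∧
      Tendsto (fun k => parabQuot g x w (t k) (zk k)) atTop (𝓝 (parabolicSubderiv g x w z))

/-- The (contingent) tangent cone to `C` at `x`. -/
def tangentConeOf (C : Set E) (x : E) : Set E :=
  {w | ∃ t : ℕ → ℝ, ∃ w' : ℕ → E, (∀ k, 0 < t k) ∧ Tendsto t atTop (𝓝 0) ∧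
    Tendsto w' atTop (𝓝 w) ∧ ∀ k, x + t k • w' k ∈ C}

/-- The second-order tangent set to `C` at `x` for `w`. -/
def tangentCone2Of (C : Set E) (x w : E) : Set E :=
  {u | ∃ t : ℕ → ℝ, ∃ u' : ℕ → E, (∀ k, 0 < t k) ∧ Tendsto t atTop (𝓝 0) ∧
    Tendsto u' atTop (𝓝 u) ∧ ∀ k, x + t k • w + (t k ^ 2 / 2) • u' k ∈ C}

/-- Parabolic derivability of the set `C` at `x` for `w`. -/
def ParabolicallyDerivable (C : Set E) (x w : E) : Prop :=
  (tangentCone2Of C x w).Nonempty ∧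
  ∀ u ∈ tangentCone2Of C x w, ∃ ε > (0 : ℝ), ∃ ξ : ℝ → E,
    (∀ t ∈ Set.Icc (0 : ℝ) ε, ξ t ∈ C) ∧ ξ 0 = x ∧
    Tendsto (fun t : ℝ => t⁻¹ • (ξ t - x)) (𝓝[>] 0) (𝓝 w) ∧
    Tendsto (fun t : ℝ => (2 / t ^ 2) • (ξ t - x - t • w)) (𝓝[>] 0) (𝓝 u)

/-- The convex subdifferential of `g` at `x` (w.r.t. the pairing `ip`). -/
def convSubdiff (ip : E → E → ℝ) (g : E → EReal) (x : E) : Set E :=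
  {v | ∀ y, ((ip v (y - x) : ℝ) : EReal) + g x ≤ g y}

/-- Convexity for extended-real-valued functions. -/
def ConvexEReal (g : E → EReal) : Prop :=
  ∀ x y : E, ∀ t : ℝ, 0 ≤ t → t ≤ 1 →
    g (t • x + (1 - t) • y) ≤ ((t : ℝ) : EReal) * g x + ((1 - t : ℝ) : EReal) * g y

end Variational

/-- Local Lipschitz continuity of `f` relative to its domain (everywhere on the domain). -/
def LocLipRelDom {n : ℕ} (f : (Fin n → ℝ) → EReal) : Prop :=
  ∀ x, f x ≠ ⊤ → ∃ l ≥ (0 : ℝ), ∃ U ∈ 𝓝 x, ∀ y ∈ U, ∀ z ∈ U, f y ≠ ⊤ → f z ≠ ⊤ →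
    |(f y).toReal - (f z).toReal| ≤ l * vnorm (y - z)

/-- The columns of `U` with indices `r, r+1, …, k-1`. -/
def colsFrom {k : ℕ} (r : ℕ) (U : Matrix (Fin k) (Fin k) ℝ) :
    Matrix (Fin k) (Fin (k - r)) ℝ :=
  fun i j => U i ⟨r + (j : ℕ), by have := j.isLt; omega⟩

/-- The first `r` columns of `U`. -/
def firstCols {k : ℕ} (r : ℕ) (h : r ≤ k) (U : Matrix (Fin k) (Fin k) ℝ) :
    Matrix (Fin k) (Fin r) ℝ :=
  fun i j => U i (Fin.castLE h j)

/-- The submatrix of `M` with rows `a ≤ · < b` and columns `c ≤ · < d`. -/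
def subBlock {p q : ℕ} (M : Matrix (Fin p) (Fin q) ℝ) (a b c d : ℕ)
    (h1 : b ≤ p) (h2 : d ≤ q) : Matrix (Fin (b - a)) (Fin (d - c)) ℝ :=
  fun i j => M ⟨a + (i : ℕ), by have := i.isLt; omega⟩ ⟨c + (j : ℕ), by have := j.isLt; omega⟩

/-- Nuclear norm: the sum of all singular values. -/
def nucNorm {m n : ℕ} (A : Mat m n) : ℝ := ∑ j, svals A j

/-- `Ψₙ(X) = σ_{r+1}(X) + ⋯ + σ_n(X)`, the sum of the `n - r` smallest singular values. -/
def psiN {m n : ℕ} (r : ℕ) (X : Mat m n) : ℝ :=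
  ∑ s : Fin n, if r ≤ (s : ℕ) then svals X s else 0

/-- The regular (Fréchet) subdifferential of a real-valued function on matrices. -/
def regSubdiff {m n : ℕ} (g : Mat m n → ℝ) (X : Mat m n) : Set (Mat m n) :=
  {V | ∀ ε > (0 : ℝ), ∀ᶠ Y in 𝓝 X, g X + finner V (Y - X) - ε * fnorm (Y - X) ≤ g Y}

/-- Two square matrices admit a simultaneous ordered spectral decomposition. -/
def SimSpec {k : ℕ} (A B : Matrix (Fin k) (Fin k) ℝ) : Prop :=
  ∃ (W : Matrix (Fin k) (Fin k) ℝ) (a b : Fin k → ℝ), Wᵀ * W = 1 ∧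
    Antitone a ∧ Antitone b ∧
    A = W * Matrix.diagonal a * Wᵀ ∧ B = W * Matrix.diagonal b * Wᵀ

/-- Two rectangular matrices admit a simultaneous ordered singular value decomposition. -/
def SimSVD {p q : ℕ} (A B : Matrix (Fin p) (Fin q) ℝ) : Prop :=
  ∃ (U : Matrix (Fin p) (Fin p) ℝ) (V : Matrix (Fin q) (Fin q) ℝ)
    (a b : Fin q → ℝ), Uᵀ * U = 1 ∧ Vᵀ * V = 1 ∧
    Antitone a ∧ Antitone b ∧ (∀ j, 0 ≤ a j) ∧ (∀ j, 0 ≤ b j) ∧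
    A = U * mdiag (m := p) a * Vᵀ ∧ B = U * mdiag (m := p) b * Vᵀ

end Paper

open Paper

/-! Von Neumann's trace inequality `⟪X, Y⟫ ≤ ⟪σ(X), σ(Y)⟫`, together with `‖σ(X)‖ = ‖X‖`, gives
`‖σ(X) - σ(Y)‖² ≤ ‖X - Y‖²` after expanding both squares. For von Neumann's inequality write
`X = ∑ₐ σₐ uₐ vₐᵀ` and `Y = ∑_b γ_b p_b q_bᵀ` (singular value decompositions), so that
`⟪X, Y⟫ = ∑ σₐ γ_b ⟪uₐ, p_b⟫ ⟪vₐ, q_b⟫ ≤ ∑ σₐ γ_b (⟪uₐ, p_b⟫² + ⟪vₐ, q_b⟫²) / 2`.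
By Bessel's inequality both matrices of squared inner products are doubly substochastic, and for
such a matrix `D` and nonincreasing nonnegative `σ`, `γ` one has `σ ⬝ D γ ≤ σ ⬝ γ`: pad `D` to a
doubly stochastic matrix, which by Birkhoff's theorem is a convex combination of permutation
matrices, and apply the rearrangement inequality. -/

section Rearrangement

variable {ι : Type*} [Fintype ι] [DecidableEq ι] {f g : ι → ℝ}

theorem Monovary.dotProduct_mulVec_le_of_mem_doublyStochastic (hfg : Monovary f g)
    {d : Matrix ι ι ℝ} (hd : d ∈ doublyStochastic ℝ ι) : f ⬝ᵥ d *ᵥ g ≤ f ⬝ᵥ g := by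
  let φ : Matrix ι ι ℝ →ₗ[ℝ] ℝ :=
    { toFun := fun d => f ⬝ᵥ d *ᵥ g
      map_add' := fun _ _ => by simp only [add_mulVec, dotProduct_add]
      map_smul' := fun _ _ => by simp only [smul_mulVec, dotProduct_smul, RingHom.id_apply] }
  rw [← SetLike.mem_coe, doublyStochastic_eq_convexHull_permMatrix] at hd
  obtain ⟨_, ⟨σ, rfl⟩, hσ⟩ :=
    (φ.convexOn convex_univ).exists_ge_of_mem_convexHull (Set.subset_univ _) hd
  calc f ⬝ᵥ d *ᵥ g ≤ f ⬝ᵥ σ.permMatrix ℝ *ᵥ g := hσ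
    _ = ∑ i, f i * g (σ i) := by rw [permMatrix_mulVec]; rfl
    _ ≤ f ⬝ᵥ g := hfg.sum_mul_comp_perm_le_sum_mul

theorem fromBlocks_mem_doublyStochastic {d : Matrix ι ι ℝ} (hd : ∀ i j, 0 ≤ d i j)
    (hrow : ∀ i, ∑ j, d i j ≤ 1) (hcol : ∀ j, ∑ i, d i j ≤ 1) :
    fromBlocks d (diagonal fun i => 1 - ∑ j, d i j) (diagonal fun j => 1 - ∑ i, d i j) dᵀ
      ∈ doublyStochastic ℝ (ι ⊕ ι) := by
  refine mem_doublyStochastic_iff_sum.2 ⟨?_, ?_, ?_⟩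
  · rintro (i | i) (j | j) <;> simp only [fromBlocks_apply₁₁, fromBlocks_apply₁₂,
      fromBlocks_apply₂₁, fromBlocks_apply₂₂, diagonal_apply, transpose_apply]
    · exact hd i j
    · split_ifs with h
      · subst h; linarith [hrow i]
      · rfl
    · split_ifs with h
      · subst h; linarith [hcol i]
      · rfl
    · exact hd j i
  · rintro (i | i) <;> simp [Fintype.sum_sum_type, diagonal_apply]
  · rintro (j | j) <;> simp [Fintype.sum_sum_type, diagonal_apply]

theorem Monovary.dotProduct_mulVec_le_of_sum_le_one (hfg : Monovary f g) (hf : 0 ≤ f)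
    (hg : 0 ≤ g) {d : Matrix ι ι ℝ} (hd : ∀ i j, 0 ≤ d i j) (hrow : ∀ i, ∑ j, d i j ≤ 1)
    (hcol : ∀ j, ∑ i, d i j ≤ 1) : f ⬝ᵥ d *ᵥ g ≤ f ⬝ᵥ g := by
  have hmono : Monovary (Sum.elim f (0 : ι → ℝ)) (Sum.elim g (0 : ι → ℝ)) := by
    rintro (i | i) (j | j) hij
    · exact hfg hij
    · exact absurd hij (not_lt.2 (hg i))
    · exact hf j
    · exact absurd hij (lt_irrefl 0)
  simpa [fromBlocks_mulVec, Function.comp_def, ← Pi.zero_def] using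
    hmono.dotProduct_mulVec_le_of_mem_doublyStochastic
      (fromBlocks_mem_doublyStochastic hd hrow hcol)

end Rearrangement

theorem Monovary.sum_sum_mul_inner_sq_le {ι E : Type*} [Fintype ι] [NormedAddCommGroup E]
    [InnerProductSpace ℝ E] {f g : ι → ℝ} (hfg : Monovary f g) (hf : 0 ≤ f) (hg : 0 ≤ g)
    {u p : ι → E} (hu : Orthonormal ℝ u) (hp : Orthonormal ℝ p) :
    ∑ a, ∑ b, f a * g b * inner ℝ (u a) (p b) ^ 2 ≤ ∑ a, f a * g a := by
  classical
  have bessel : ∀ {w e : ι → E}, Orthonormal ℝ w → Orthonormal ℝ e →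
      ∀ a, ∑ b, inner ℝ (w a) (e b) ^ 2 ≤ 1 := fun {w e} hw he a => by
    simpa [real_inner_comm, hw.1 a] using
      Orthonormal.sum_inner_products_le (w a) he (s := Finset.univ)
  have := hfg.dotProduct_mulVec_le_of_sum_le_one hf hg
    (d := of fun a b => inner ℝ (u a) (p b) ^ 2) (fun _ _ => sq_nonneg _)
    (fun a => by simpa using bessel hu hp a)
    (fun b => by simpa [real_inner_comm] using bessel hp hu b)
  simpa [dotProduct, mulVec, Finset.mul_sum, mul_comm, mul_left_comm, mul_assoc] using this

open Module

theorem exists_orthonormal_smul_eq_of_pairwise_inner_eq_zero {𝕜 E ι : Type*} [RCLike 𝕜]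
    [NormedAddCommGroup E] [InnerProductSpace 𝕜 E] [FiniteDimensional 𝕜 E] [Fintype ι]
    {x : ι → E} (hx : Pairwise fun i j => inner 𝕜 (x i) (x j) = 0)
    (hcard : Fintype.card ι ≤ finrank 𝕜 E) :
    ∃ u : ι → E, Orthonormal 𝕜 u ∧ ∀ i, x i = (‖x i‖ : 𝕜) • u i := by
  classical
  have hκ : finrank 𝕜 E = Fintype.card (ι ⊕ Fin (finrank 𝕜 E - Fintype.card ι)) := by
    simp only [Fintype.card_sum, Fintype.card_fin]; omega
  let v : ι ⊕ Fin (finrank 𝕜 E - Fintype.card ι) → E :=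
    Sum.elim (fun i => (‖x i‖⁻¹ : 𝕜) • x i) 0
  have hv : Orthonormal 𝕜 ((Sum.inl '' {i | x i ≠ 0}).domRestrict v) := by
    rw [orthonormal_iff_ite]
    rintro ⟨_, i, hi, rfl⟩ ⟨_, j, hj, rfl⟩
    simp only [Set.domRestrict_apply, v, Sum.elim_inl]
    split_ifs with hij
    · obtain rfl : i = j := Sum.inl_injective (congrArg Subtype.val hij)
      simp [inner_self_eq_norm_sq_to_K, hi.out]
    · have hij : i ≠ j := by rintro rfl; exact hij rfl
      simp [inner_smul_left, inner_smul_right, hx hij]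
  obtain ⟨b, hb⟩ := hv.exists_orthonormalBasis_extension_of_card_eq hκ
  refine ⟨fun i => b (Sum.inl i), b.orthonormal.comp _ Sum.inl_injective, fun i => ?_⟩
  by_cases hi : x i = 0
  · simp [hi]
  · simp [hb _ ⟨i, hi, rfl⟩, v, smul_smul, hi]

namespace Paper

open RealInnerProductSpace

lemma exists_orthonormalBasis_mulVec_eq_eigs {k : ℕ} {A : Matrix (Fin k) (Fin k) ℝ}
    (hA : A.IsHermitian) : ∃ v : OrthonormalBasis (Fin k) ℝ (EuclideanSpace ℝ (Fin k)),
      ∀ a, A *ᵥ ⇑(v a) = eigs A hA a • ⇑(v a) :=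
  ⟨hA.eigenvectorBasis.reindex (Tuple.sort fun j => -hA.eigenvalues j).symm, fun a => by
    simpa [eigs] using hA.mulVec_eigenvectorBasis _⟩

lemma eigs_antitone {k : ℕ} {A : Matrix (Fin k) (Fin k) ℝ} (hA : A.IsHermitian) :
    Antitone (eigs A hA) := fun _ _ hij => by
  simpa [eigs] using Tuple.monotone_sort (fun j => -hA.eigenvalues j) hij

variable {m n : ℕ}

lemma svals_nonneg (X : Mat m n) : 0 ≤ svals X := fun _ => Real.sqrt_nonneg _

lemma svals_antitone (X : Mat m n) : Antitone (svals X) := fun _ _ hij =>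
  Real.sqrt_le_sqrt (eigs_antitone _ hij)

lemma svals_sq (X : Mat m n) (a : Fin n) :
    svals X a ^ 2 = eigs _ (isHermitian_conjTranspose_mul_self X) a :=
  Real.sq_sqrt ((posSemidef_conjTranspose_mul_self X).eigenvalues_nonneg _)

theorem exists_svd (hmn : n ≤ m) (X : Mat m n) :
    ∃ (u : Fin n → EuclideanSpace ℝ (Fin m))
      (v : OrthonormalBasis (Fin n) ℝ (EuclideanSpace ℝ (Fin n))),
      Orthonormal ℝ u ∧ ∀ i j, X i j = ∑ a, svals X a * u a i * v a j := by
  obtain ⟨v, hv⟩ := exists_orthonormalBasis_mulVec_eq_eigs (isHermitian_conjTranspose_mul_self X)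
  let x : Fin n → EuclideanSpace ℝ (Fin m) := fun a => WithLp.toLp 2 (X *ᵥ v a)
  have hinner : ∀ a b,
      ⟪x a, x b⟫ = eigs _ (isHermitian_conjTranspose_mul_self X) a * ⟪v a, v b⟫ := by
    intro a b
    simp only [x, EuclideanSpace.inner_eq_star_dotProduct, star_trivial]
    rw [← vecMul_transpose, dotProduct_mulVec, vecMul_vecMul, ← dotProduct_mulVec,
      ← conjTranspose_eq_transpose_of_trivial, hv, dotProduct_smul, smul_eq_mul]
  have hnorm : ∀ a, ‖x a‖ = svals X a := by
    intro a
    rw [← sq_eq_sq₀ (norm_nonneg _) (svals_nonneg X a), ← real_inner_self_eq_norm_sq, hinner,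
      real_inner_self_eq_norm_sq, v.orthonormal.1 a, one_pow, mul_one, svals_sq]
  obtain ⟨u, hu, hxu⟩ := exists_orthonormal_smul_eq_of_pairwise_inner_eq_zero (𝕜 := ℝ) (x := x)
    (fun a b hab => by dsimp only; rw [hinner, v.orthonormal.2 hab, mul_zero])
    (by simpa using hmn)
  refine ⟨u, v, hu, fun i j => ?_⟩
  have hparseval : ∀ k, ∑ a, v a k * v a j = if k = j then 1 else 0 := fun k => by
    simpa [EuclideanSpace.inner_single_left, EuclideanSpace.inner_single_right, mul_comm,
      eq_comm] using v.sum_inner_mul_inner (EuclideanSpace.single k 1) (EuclideanSpace.single j 1)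
  calc X i j = ∑ k, X i k * ∑ a, v a k * v a j := by simp [hparseval]
    _ = ∑ a, x a i * v a j := by
        simp only [x, mulVec, dotProduct, Finset.mul_sum, Finset.sum_mul, mul_assoc]
        exact Finset.sum_comm
    _ = ∑ a, svals X a * u a i * v a j := Finset.sum_congr rfl fun a _ => by
        rw [hxu a, hnorm, PiLp.smul_apply, smul_eq_mul, RCLike.ofReal_real_eq_id, id]

lemma finner_eq_sum_inner_mul_inner {ι κ : Type*} [Fintype ι] [Fintype κ] {X Y : Mat m n}
    {σ : ι → ℝ} {γ : κ → ℝ} {u : ι → EuclideanSpace ℝ (Fin m)}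
    {v : ι → EuclideanSpace ℝ (Fin n)} {p : κ → EuclideanSpace ℝ (Fin m)}
    {q : κ → EuclideanSpace ℝ (Fin n)} (hX : ∀ i j, X i j = ∑ a, σ a * u a i * v a j)
    (hY : ∀ i j, Y i j = ∑ b, γ b * p b i * q b j) :
    finner X Y = ∑ a, ∑ b, σ a * γ b * (⟪u a, p b⟫ * ⟪v a, q b⟫) := by
  simp only [finner, hX, hY, EuclideanSpace.inner_eq_star_dotProduct, dotProduct, star_trivial]
  simp_rw [Finset.sum_mul_sum, Finset.mul_sum,
    Finset.sum_comm (s := (Finset.univ : Finset (Fin m))),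
    Finset.sum_comm (s := (Finset.univ : Finset (Fin n)))]
  exact Finset.sum_congr rfl fun a _ => Finset.sum_congr rfl fun b _ =>
    Finset.sum_congr rfl fun i _ => Finset.sum_congr rfl fun j _ => by ring

lemma vinner_svals_self (hmn : n ≤ m) (X : Mat m n) :
    vinner (svals X) (svals X) = finner X X := by
  obtain ⟨u, v, hu, hX⟩ := exists_svd hmn X
  rw [finner_eq_sum_inner_mul_inner hX hX]
  simp [vinner, orthonormal_iff_ite.1 hu, orthonormal_iff_ite.1 v.orthonormal]

theorem finner_le_vinner_svals (hmn : n ≤ m) (X Y : Mat m n) :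
    finner X Y ≤ vinner (svals X) (svals Y) := by
  obtain ⟨u, v, hu, hX⟩ := exists_svd hmn X
  obtain ⟨p, q, hp, hY⟩ := exists_svd hmn Y
  have hmono : Monovary (svals X) (svals Y) := (svals_antitone X).monovary (svals_antitone Y)
  have hM := hmono.sum_sum_mul_inner_sq_le (svals_nonneg X) (svals_nonneg Y) hu hp
  have hN := hmono.sum_sum_mul_inner_sq_le (svals_nonneg X) (svals_nonneg Y) v.orthonormal
    q.orthonormal
  rw [finner_eq_sum_inner_mul_inner hX hY]
  calc ∑ a, ∑ b, svals X a * svals Y b * (⟪u a, p b⟫ * ⟪v a, q b⟫)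
      ≤ ∑ a, ∑ b, (svals X a * svals Y b * ⟪u a, p b⟫ ^ 2
          + svals X a * svals Y b * ⟪v a, q b⟫ ^ 2) / 2 := by
        gcongr with a _ b _
        have := mul_nonneg (svals_nonneg X a) (svals_nonneg Y b)
        nlinarith [two_mul_le_add_sq ⟪u a, p b⟫ ⟪v a, q b⟫]
    _ = ((∑ a, ∑ b, svals X a * svals Y b * ⟪u a, p b⟫ ^ 2)
          + ∑ a, ∑ b, svals X a * svals Y b * ⟪v a, q b⟫ ^ 2) / 2 := by
        simp only [add_div, Finset.sum_div, Finset.sum_add_distrib]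
    _ ≤ vinner (svals X) (svals Y) := by
        rw [vinner]; linarith

lemma vinner_sub_sub_self (x y : Fin n → ℝ) :
    vinner (x - y) (x - y) = vinner x x - 2 * vinner x y + vinner y y := by
  simp only [vinner, Pi.sub_apply, Finset.mul_sum, ← Finset.sum_sub_distrib,
    ← Finset.sum_add_distrib]
  exact Finset.sum_congr rfl fun _ _ => by ring

lemma finner_sub_sub_self (X Y : Mat m n) :
    finner (X - Y) (X - Y) = finner X X - 2 * finner X Y + finner Y Y := by
  simp only [finner, Matrix.sub_apply, Finset.mul_sum, ← Finset.sum_sub_distrib,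
    ← Finset.sum_add_distrib]
  exact Finset.sum_congr rfl fun _ _ => Finset.sum_congr rfl fun _ _ => by ring

end Paper

/-- The singular value map is 1-Lipschitz: `‖σ(X) − σ(Y)‖ ≤ ‖X − Y‖`. -/
theorem stmt1 {m n : ℕ} (hmn : n ≤ m) (X Y : Mat m n) :
    vnorm (svals X - svals Y) ≤ fnorm (X - Y) := by
  refine Real.sqrt_le_sqrt ?_
  rw [vinner_sub_sub_self, finner_sub_sub_self, vinner_svals_self hmn X, vinner_svals_self hmn Y]
  linarith [finner_le_vinner_svals hmn X Y]
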